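/- arXiv:2111.09449 — 4 statements merged into one kernel-verified Lean document; each statement's English description precedes it below -/
import Mathlib

section
/- For all natural numbers c and K with K ≥ 1, the inequality (K−1)^c · (∑_{p=1}^{K} p^c) ≤ 2 · K^c · (∑_{p=0}^{K−1} p^c) holds. -/
/-- The power-sum inequality `(K-1)^c * ∑_{p=1}^K p^c ≤ 2 * K^c * ∑_{p=0}^{K-1} p^c`. -/
theorem stmt_3 (c K : ℕ) (hK : 1 ≤ K) :
    (K - 1) ^ c * (∑ p ∈ Finset.Icc 1 K, p ^ c) ≤
      2 * K ^ c * (∑ p ∈ Finset.range K, p ^ c) := by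
  set S := ∑ p ∈ Finset.range K, p ^ c with hS
  have h1 : ∑ p ∈ Finset.Icc 1 K, p ^ c ≤ S + K ^ c := by
    have h0 : (0 : ℕ) ^ c + ∑ p ∈ Finset.Icc 1 K, p ^ c = S + K ^ c := by
      have : Finset.range (K + 1) = insert 0 (Finset.Icc 1 K) := by
        ext x
        simp [Nat.lt_succ_iff]
        omega
      rw [← Finset.sum_range_succ, this, Finset.sum_insert (by simp)]
    calc ∑ p ∈ Finset.Icc 1 K, p ^ c ≤ 0 ^ c + ∑ p ∈ Finset.Icc 1 K, p ^ c :=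
          Nat.le_add_left _ _
      _ = S + K ^ c := h0
  have h2 : (K - 1) ^ c ≤ K ^ c := Nat.pow_le_pow_left (Nat.sub_le _ _) c
  have h3 : (K - 1) ^ c ≤ S := by
    apply Finset.single_le_sum (f := fun p => p ^ c) (fun i _ => Nat.zero_le _)
    simp [Finset.mem_range]; omega
  calc (K - 1) ^ c * (∑ p ∈ Finset.Icc 1 K, p ^ c)
      ≤ (K - 1) ^ c * (S + K ^ c) := Nat.mul_le_mul_left _ h1
    _ = (K - 1) ^ c * S + (K - 1) ^ c * K ^ c := by ring
    _ ≤ K ^ c * S + S * K ^ c :=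
        Nat.add_le_add (Nat.mul_le_mul_right _ h2) (Nat.mul_le_mul_right _ h3)
    _ = 2 * K ^ c * S := by ring
end

section
/- For all natural numbers c and K with K ≥ 1, the inequality (K−1)^{2c} · K^{c+1} ≤ 2 · (c+1) · K^{2c} · (∑_{p=0}^{K−1} p^c) holds. -/
lemma aux_pow_succ (c p : ℕ) : (p+1)^(c+1) ≤ p^(c+1) + (c+1)*(p+1)^c := by
  induction c with
  | zero => simp
  | succ d ih =>
    have : (p+1)^(d+2) = (p+1)^(d+1) * (p+1) := by ring
    rw [this]
    calc (p+1)^(d+1) * (p+1) ≤ (p^(d+1) + (d+1)*(p+1)^d) * (p+1) :=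
          Nat.mul_le_mul_right _ ih
      _ = p^(d+2) + p^(d+1) + (d+1)*(p+1)^(d+1) := by ring
      _ ≤ p^(d+2) + (p+1)^(d+1) + (d+1)*(p+1)^(d+1) := by
          have := Nat.pow_le_pow_left (Nat.le_add_right p 1) (d+1)
          omega
      _ = p^(d+2) + (d+2)*(p+1)^(d+1) := by ring

lemma aux_sum (c m : ℕ) : m^(c+1) ≤ (c+1) * ∑ p ∈ Finset.range (m+1), p^c := by
  induction m with
  | zero => simp
  | succ n ih =>
    rw [Finset.sum_range_succ, Nat.mul_add]
    calc (n+1)^(c+1) ≤ n^(c+1) + (c+1)*(n+1)^c := aux_pow_succ c n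
      _ ≤ (c+1) * ∑ p ∈ Finset.range (n+1), p^c + (c+1)*(n+1)^c := by omega

/-- The power-sum inequality
`(K-1)^(2c) * K^(c+1) ≤ 2 * (c+1) * K^(2c) * ∑_{p=0}^{K-1} p^c`. -/
theorem stmt_5 (c K : ℕ) (hK : 1 ≤ K) :
    (K - 1) ^ (2 * c) * K ^ (c + 1) ≤
      2 * (c + 1) * K ^ (2 * c) * ∑ p ∈ Finset.range K, p ^ c := by
  obtain ⟨m, rfl⟩ : ∃ m, K = m + 1 := ⟨K - 1, by omega⟩
  rw [Nat.add_sub_cancel]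
  rcases c with _ | d
  · simp only [Nat.mul_zero, pow_zero, one_mul, mul_one, pow_one]
    simp [Finset.sum_const]
  · have h1 : m^(d+2) ≤ (d+2) * ∑ p ∈ Finset.range (m+1), p^(d+1) :=
      aux_sum (d+1) m
    have h2 : m^d * (m+1)^(d+2) ≤ (m+1)^(2*(d+1)) := by
      calc m^d * (m+1)^(d+2) ≤ (m+1)^d * (m+1)^(d+2) :=
            Nat.mul_le_mul_right _ (Nat.pow_le_pow_left (Nat.le_succ m) d)
        _ = (m+1)^(2*(d+1)) := by ring
    calc (m)^(2*(d+1)) * (m+1)^(d+1+1)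
        = m^(d+2) * (m^d * (m+1)^(d+2)) := by ring
      _ ≤ ((d+2) * ∑ p ∈ Finset.range (m+1), p^(d+1)) * (m+1)^(2*(d+1)) :=
          Nat.mul_le_mul h1 h2
      _ ≤ 2 * (((d+2) * ∑ p ∈ Finset.range (m+1), p^(d+1)) * (m+1)^(2*(d+1))) :=
          Nat.le_mul_of_pos_left _ two_pos
      _ = 2 * (d+1+1) * (m+1)^(2*(d+1)) * ∑ p ∈ Finset.range (m+1), p^(d+1) := by ring
end

section
/- Let c and K be natural numbers with K ≥ 1. Under the uniform probability distribution on functions f : Fin (c+1) → Fin K, the probability of the event {f j < f 0 for every j ≠ 0} is at least (1 − 1/K)^{2c} / (2(c+1)); in particular, for K ≥ 2 this probability is strictly positive. -/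
/-!
Fixing the initiator's value `f 0 = v`, the favourable assignments are exactly the maps of the
remaining `c` indices into `{0, …, v - 1}`, so there are `∑ v < K, v ^ c` of them. Comparing this
sum with `∫₀^{K-1} x^c dx` (telescoping `(a + 1)^(c+1) - a^(c+1) ≤ (c + 1)(a + 1)^c`) gives
`(K - 1)^(c+1) ≤ (c + 1) ∑ v < K, v ^ c`, i.e. a probability of at least `(1 - 1/K)^(c+1) / (c + 1)`.
For `c ≥ 1` this dominates the claimed bound since `1 - 1/K ≤ 1` and `c + 1 ≤ 2c`; for `c = 0`
the probability is `1`.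
-/

open Finset
open scoped ENNReal

theorem card_filter_forall_lt_apply_zero {α : Type*} [Fintype α] [LinearOrder α]
    [LocallyFiniteOrderBot α] (c : ℕ) :
    #{f : Fin (c + 1) → α | ∀ j, j ≠ 0 → f j < f 0} = ∑ v : α, #(Iio v) ^ c := by
  rw [card_eq_sum_card_fiberwise (f := fun f => f 0) (t := univ) fun _ _ => mem_univ _]
  refine sum_congr rfl fun v _ => ?_
  have hfiber : {f ∈ ({f : Fin (c + 1) → α | ∀ j, j ≠ 0 → f j < f 0} : Finset _) | f 0 = v} =
      Fintype.piFinset (Fin.cons ({v} : Finset α) fun _ => Iio v) := by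
    ext f
    simp only [mem_filter, mem_univ, true_and, Fintype.mem_piFinset, Fin.forall_fin_succ,
      Fin.cons_zero, Fin.cons_succ, mem_singleton, mem_Iio, ne_eq, not_true_eq_false,
      Fin.succ_ne_zero, not_false_eq_true, forall_const, IsEmpty.forall_iff]
    constructor
    · rintro ⟨h, rfl⟩; exact ⟨rfl, h⟩
    · rintro ⟨rfl, h⟩; exact ⟨h, rfl⟩
  rw [hfiber, Fintype.card_piFinset, Fin.prod_univ_succ]
  simp

theorem card_fin_filter_forall_lt_apply_zero (c K : ℕ) :
    #{f : Fin (c + 1) → Fin K | ∀ j, j ≠ 0 → f j < f 0} = ∑ v ∈ range K, v ^ c := by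
  simp only [card_filter_forall_lt_apply_zero, Fin.card_Iio]
  exact Fin.sum_univ_eq_sum_range (· ^ c) K

theorem toMeasure_uniformOfFintype_forall_lt_apply_zero (c K : ℕ) [NeZero K] :
    (PMF.uniformOfFintype (Fin (c + 1) → Fin K)).toMeasure {f | ∀ j, j ≠ 0 → f j < f 0} =
      (∑ v ∈ range K, v ^ c : ℕ) / (K ^ (c + 1) : ℕ) := by
  have hcard : Fintype.card {f : Fin (c + 1) → Fin K | ∀ j, j ≠ 0 → f j < f 0} =
      ∑ v ∈ range K, v ^ c :=
    (Fintype.card_subtype _).trans (card_fin_filter_forall_lt_apply_zero c K)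
  rw [PMF.toMeasure_uniformOfFintype_apply _ (.of_discrete), hcard]
  simp

theorem succ_pow_succ_le_pow_succ_add (a n : ℕ) :
    (a + 1) ^ (n + 1) ≤ a ^ (n + 1) + (n + 1) * (a + 1) ^ n := by
  induction n with
  | zero => simp
  | succ n ih =>
    have hmono : a ^ (n + 1) ≤ (a + 1) ^ (n + 1) := Nat.pow_le_pow_left a.le_succ _
    calc (a + 1) ^ (n + 2) = (a + 1) ^ (n + 1) * (a + 1) := pow_succ _ _
      _ ≤ (a ^ (n + 1) + (n + 1) * (a + 1) ^ n) * (a + 1) := Nat.mul_le_mul_right _ ih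
      _ = a ^ (n + 2) + a ^ (n + 1) + (n + 1) * (a + 1) ^ (n + 1) := by ring
      _ ≤ a ^ (n + 2) + (n + 2) * (a + 1) ^ (n + 1) := by nlinarith

theorem pow_succ_le_mul_sum_range_pow (c n : ℕ) :
    n ^ (c + 1) ≤ (c + 1) * ∑ v ∈ range (n + 1), v ^ c := by
  induction n with
  | zero => simp
  | succ n ih =>
    rw [sum_range_succ, mul_add]
    exact (succ_pow_succ_le_pow_succ_add n c).trans (Nat.add_le_add_right ih _)

theorem pow_mul_succ_pow_le_sum_range_pow_mul (c n : ℕ) :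
    n ^ (2 * c) * (n + 1) ^ (c + 1) ≤
      (∑ v ∈ range (n + 1), v ^ c) * ((n + 1) ^ (2 * c) * (2 * (c + 1))) := by
  set S := ∑ v ∈ range (n + 1), v ^ c
  rcases c with _ | d
  · simp [S]
  · have hS := pow_succ_le_mul_sum_range_pow (d + 1) n
    have hpow : n ^ d ≤ (n + 1) ^ d := Nat.pow_le_pow_left n.le_succ d
    calc n ^ (2 * (d + 1)) * (n + 1) ^ (d + 1 + 1)
        = n ^ (d + 1 + 1) * (n ^ d * (n + 1) ^ (d + 2)) := by ring
      _ ≤ ((d + 1 + 1) * S) * ((n + 1) ^ d * (n + 1) ^ (d + 2)) :=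
          Nat.mul_le_mul hS (Nat.mul_le_mul_right _ hpow)
      _ ≤ S * ((n + 1) ^ (2 * (d + 1)) * (2 * (d + 1 + 1))) := by ring_nf; omega

theorem ENNReal.natCast_div_le_natCast_div {a b s d : ℕ} (hb : b ≠ 0) (hd : d ≠ 0)
    (h : a * d ≤ s * b) : (a : ℝ≥0∞) / b ≤ s / d := by
  rw [ENNReal.le_div_iff_mul_le (.inl (by exact_mod_cast hd)) (.inl (ENNReal.natCast_ne_top d)),
    div_eq_mul_inv, mul_right_comm, ← div_eq_mul_inv,
    ENNReal.div_le_iff (by exact_mod_cast hb) (ENNReal.natCast_ne_top b)]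
  exact_mod_cast h

theorem ENNReal.natCast_div_pow_div (a b d k : ℕ) :
    ((a : ℝ≥0∞) / b) ^ k / d = (a ^ k : ℕ) / (b ^ k * d : ℕ) := by
  push_cast
  rw [div_eq_mul_inv, div_eq_mul_inv, div_eq_mul_inv, mul_pow, ← ENNReal.inv_pow, mul_assoc,
    ENNReal.mul_inv (.inr (ENNReal.natCast_ne_top d)) (.inl (by simp))]

theorem ENNReal.one_sub_one_div_natCast_succ (n : ℕ) :
    1 - 1 / ((n + 1 : ℕ) : ℝ≥0∞) = n / (n + 1 : ℕ) := by
  rw [ENNReal.eq_div_iff (by simp) (by simp), ENNReal.mul_sub (fun _ _ => by simp), mul_one,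
    ENNReal.mul_div_cancel (by simp) (by simp)]
  simp

theorem le_toMeasure_uniformOfFintype_forall_lt_apply_zero (c n : ℕ) :
    (1 - 1 / ((n + 1 : ℕ) : ℝ≥0∞)) ^ (2 * c) / (2 * (c + 1)) ≤
      (PMF.uniformOfFintype (Fin (c + 1) → Fin (n + 1))).toMeasure
        {f | ∀ j, j ≠ 0 → f j < f 0} := by
  have h2c : (2 * (c + 1) : ℝ≥0∞) = (2 * (c + 1) : ℕ) := by push_cast; rfl
  rw [toMeasure_uniformOfFintype_forall_lt_apply_zero, ENNReal.one_sub_one_div_natCast_succ, h2c,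
    ENNReal.natCast_div_pow_div]
  exact ENNReal.natCast_div_le_natCast_div (by positivity) (by positivity)
    (pow_mul_succ_pow_le_sum_range_pow_mul c n)

/-- Under the uniform distribution on priority assignments `f : Fin (c+1) → Fin K`
(with `K ≥ 1`), the probability that the initiator (index 0) holds the unique highest
priority is at least `(1 - 1/K)^(2c) / (2(c+1))`; for `K ≥ 2` it is strictly positive. -/
theorem stmt_6 (c K : ℕ) (hK : 1 ≤ K) :
    haveI : Nonempty (Fin (c + 1) → Fin K) := ⟨fun _ => ⟨0, hK⟩⟩
    (1 - 1 / (K : ENNReal)) ^ (2 * c) / (2 * (c + 1)) ≤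
        (PMF.uniformOfFintype (Fin (c + 1) → Fin K)).toMeasure
          {f | ∀ j, j ≠ 0 → f j < f 0} ∧
      (2 ≤ K →
        0 < (PMF.uniformOfFintype (Fin (c + 1) → Fin K)).toMeasure
          {f | ∀ j, j ≠ 0 → f j < f 0}) := by
  obtain ⟨n, rfl⟩ := Nat.exists_eq_add_of_le' hK
  have hbound := le_toMeasure_uniformOfFintype_forall_lt_apply_zero c n
  refine ⟨hbound, fun hK2 => lt_of_lt_of_le ?_ hbound⟩
  have hpos : 0 < 1 - 1 / ((n + 1 : ℕ) : ℝ≥0∞) := by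
    rw [tsub_pos_iff_lt, one_div, ENNReal.inv_lt_one]
    exact_mod_cast hK2
  exact ENNReal.div_pos (pow_ne_zero _ hpos.ne') (by finiteness)
end

section
/- Let c and K be natural numbers with K ≥ 2. Under the uniform probability distribution on functions f : Fin (c+1) → Fin K, the conditional probability of the event {f j < f 0 for every j ≠ 0}, given the event {f j ≠ f 0 for every j ≠ 0}, equals (∑_{p=0}^{K−1} p^c) / (K · (K−1)^c), i.e., equals ∑_{p=0}^{K−1} (1/K) · (p/(K−1))^c. -/
open ProbabilityTheory


def splitEquiv (c K : ℕ) : (Fin (c+1) → Fin K) ≃ Fin K × (Fin c → Fin K) where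
  toFun f := (f 0, fun i => f i.succ)
  invFun pg := Fin.cons pg.1 pg.2
  left_inv f := by
    funext j
    induction j using Fin.cases <;> simp
  right_inv pg := by simp

lemma card_pred (c K : ℕ) (Q : Fin K → Fin K → Prop) [∀ p x, Decidable (Q p x)] :
    Fintype.card {f : Fin (c+1) → Fin K // ∀ j, j ≠ 0 → Q (f 0) (f j)} =
      ∑ p : Fin K, (Fintype.card {x : Fin K // Q p x}) ^ c := by
  have e1 : {f : Fin (c+1) → Fin K // ∀ j, j ≠ 0 → Q (f 0) (f j)} ≃
      {pg : Fin K × (Fin c → Fin K) // ∀ i, Q pg.1 (pg.2 i)} := by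
    refine (Equiv.subtypeEquiv (splitEquiv c K) ?_)
    intro f
    constructor
    · intro h i; exact h i.succ (Fin.succ_ne_zero i)
    · intro h j hj
      induction j using Fin.cases with
      | zero => exact absurd rfl hj
      | succ i => exact h i
  rw [Fintype.card_congr (e1.trans (Equiv.subtypeProdEquivSigmaSubtype
    (fun (a : Fin K) (b : Fin c → Fin K) => ∀ i, Q a (b i)))), Fintype.card_sigma]
  congr 1
  funext p
  rw [Fintype.card_congr (Equiv.subtypePiEquivPi (p := fun _ x => Q p x)),
    Fintype.card_pi, Finset.prod_const, Finset.card_univ, Fintype.card_fin]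

lemma card_lt_pred (c K : ℕ) :
    Fintype.card {f : Fin (c+1) → Fin K // ∀ j, j ≠ 0 → f j < f 0} =
      ∑ p ∈ Finset.range K, p ^ c := by
  have := card_pred c K (fun p x => x < p)
  rw [this, ← Fin.sum_univ_eq_sum_range]
  congr 1; funext p; congr 1
  have e : {x : Fin K // x < p} ≃ Fin p :=
    { toFun := fun x => ⟨x.1.1, x.2⟩
      invFun := fun i => ⟨⟨i.1, i.2.trans p.2⟩, i.2⟩
      left_inv := fun x => rfl
      right_inv := fun i => rfl }
  rw [Fintype.card_congr e, Fintype.card_fin]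

lemma card_ne_pred (c K : ℕ) (hK : 1 ≤ K) :
    Fintype.card {f : Fin (c+1) → Fin K // ∀ j, j ≠ 0 → f j ≠ f 0} =
      K * (K - 1) ^ c := by
  have := card_pred c K (fun p x => x ≠ p)
  rw [this]
  have hcard : ∀ p : Fin K, Fintype.card {x : Fin K // x ≠ p} = K - 1 := by
    intro p
    rw [Fintype.card_subtype_compl, Fintype.card_fin, Fintype.card_subtype_eq]
  simp [hcard, Finset.sum_const, mul_comm]

/-- Under the uniform distribution on priority assignments `f : Fin (c+1) → Fin K`
(with `K ≥ 2`), the conditional probability that the initiator holds the unique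
highest priority, given that its priority is unique, equals
`(∑_{p=0}^{K-1} p^c) / (K * (K-1)^c) = ∑_{p=0}^{K-1} (1/K) * (p/(K-1))^c`. -/
theorem stmt_8 (c K : ℕ) (hK : 2 ≤ K) :
    haveI : Nonempty (Fin (c + 1) → Fin K) := ⟨fun _ => ⟨0, by omega⟩⟩
    ((PMF.uniformOfFintype (Fin (c + 1) → Fin K)).toMeasure[|{f | ∀ j, j ≠ 0 → f j ≠ f 0}])
          {f | ∀ j, j ≠ 0 → f j < f 0} =
        (∑ p ∈ Finset.range K, (p : ENNReal) ^ c) / (K * ((K : ENNReal) - 1) ^ c) ∧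
      ((PMF.uniformOfFintype (Fin (c + 1) → Fin K)).toMeasure[|{f | ∀ j, j ≠ 0 → f j ≠ f 0}])
          {f | ∀ j, j ≠ 0 → f j < f 0} =
        ∑ p ∈ Finset.range K, (1 / (K : ENNReal)) * ((p : ENNReal) / ((K : ENNReal) - 1)) ^ c := by
  haveI : Nonempty (Fin (c + 1) → Fin K) := ⟨fun _ => ⟨0, by omega⟩⟩
  set S : ENNReal := ∑ p ∈ Finset.range K, (p : ENNReal) ^ c with hS
  set D : ENNReal := K * ((K : ENNReal) - 1) ^ c with hD
  set N : ENNReal := (K : ENNReal) ^ (c + 1) with hN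
  have hKcast : ((K - 1 : ℕ) : ENNReal) = (K : ENNReal) - 1 := by
    rw [ENNReal.natCast_sub]; norm_num
  have hK0 : (K : ENNReal) ≠ 0 := Nat.cast_ne_zero.mpr (by omega)
  have hKt : (K : ENNReal) ≠ ⊤ := ENNReal.natCast_ne_top K
  have hK1 : (K : ENNReal) - 1 ≠ 0 := by
    rw [← hKcast]; simp only [ne_eq, Nat.cast_eq_zero]; omega
  have hK1t : (K : ENNReal) - 1 ≠ ⊤ := by rw [← hKcast]; exact ENNReal.natCast_ne_top _
  have hD0 : D ≠ 0 := by
    rw [hD]; exact mul_ne_zero hK0 (pow_ne_zero c hK1)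
  have hDt : D ≠ ⊤ := by
    rw [hD]; exact ENNReal.mul_ne_top hKt (ENNReal.pow_ne_top hK1t)
  have hN0 : N ≠ 0 := pow_ne_zero _ hK0
  have hNt : N ≠ ⊤ := ENNReal.pow_ne_top hKt
  have hBmeas : MeasurableSet {f : Fin (c+1) → Fin K | ∀ j, j ≠ 0 → f j ≠ f 0} :=
    .of_discrete
  have hAmeas : MeasurableSet {f : Fin (c+1) → Fin K | ∀ j, j ≠ 0 → f j < f 0} :=
    .of_discrete
  have hsub : {f : Fin (c+1) → Fin K | ∀ j, j ≠ 0 → f j < f 0} ⊆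
      {f | ∀ j, j ≠ 0 → f j ≠ f 0} := fun f hf j hj => (hf j hj).ne
  have hcardA : (Nat.card {f : Fin (c+1) → Fin K | ∀ j, j ≠ 0 → f j < f 0} : ENNReal) = S := by
    have h1 : Nat.card {f : Fin (c+1) → Fin K | ∀ j, j ≠ 0 → f j < f 0}
        = ∑ p ∈ Finset.range K, p ^ c :=
      (Fintype.card_eq_nat_card (α := {f : Fin (c+1) → Fin K // ∀ j, j ≠ 0 → f j < f 0})).symm.trans
        (card_lt_pred c K)
    rw [h1, hS]; push_cast; rfl
  have hcardB : (Nat.card {f : Fin (c+1) → Fin K | ∀ j, j ≠ 0 → f j ≠ f 0} : ENNReal) = D := by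
    have h1 : Nat.card {f : Fin (c+1) → Fin K | ∀ j, j ≠ 0 → f j ≠ f 0}
        = K * (K - 1) ^ c :=
      (Fintype.card_eq_nat_card (α := {f : Fin (c+1) → Fin K // ∀ j, j ≠ 0 → f j ≠ f 0})).symm.trans
        (card_ne_pred c K (by omega))
    rw [h1, hD]; push_cast [hKcast]; rfl
  have hcardΩ : (Nat.card (Fin (c+1) → Fin K) : ENNReal) = N := by
    rw [Nat.card_eq_fintype_card, Fintype.card_fun, Fintype.card_fin, Fintype.card_fin]
    push_cast; rfl
  have key : ((PMF.uniformOfFintype (Fin (c + 1) → Fin K)).toMeasure[|{f | ∀ j, j ≠ 0 → f j ≠ f 0}])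
      {f | ∀ j, j ≠ 0 → f j < f 0} = S / D := by
    rw [ProbabilityTheory.cond_apply hBmeas,
      Set.inter_eq_self_of_subset_right hsub,
      PMF.toMeasure_uniformOfFintype_apply _ hAmeas,
      PMF.toMeasure_uniformOfFintype_apply _ hBmeas]
    simp only [Fintype.card_eq_nat_card]
    rw [hcardA, hcardB, hcardΩ]
    rw [ENNReal.eq_div_iff hD0 hDt, ENNReal.inv_div (Or.inl hNt) (Or.inl hN0),
      div_eq_mul_inv N D, div_eq_mul_inv S N]
    calc D * (N * D⁻¹ * (S * N⁻¹)) = D * D⁻¹ * (N * N⁻¹) * S := by ring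
    _ = S := by rw [ENNReal.mul_inv_cancel hD0 hDt, ENNReal.mul_inv_cancel hN0 hNt,
        one_mul, one_mul]
  refine ⟨key, key.trans ?_⟩
  rw [div_eq_mul_inv S D, hD, ENNReal.mul_inv (Or.inl hK0) (Or.inl hKt), hS,
    Finset.sum_mul]
  refine Finset.sum_congr rfl fun p _ => ?_
  rw [one_div, div_eq_mul_inv, mul_pow, ← ENNReal.inv_pow]
  ring
end
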